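/- For every i with 1 ≤ i ≤ d−1 and all X, Z ∈ 𝔤, one has trace(⁅X,E_i⁆·Zᵀ) + trace(⁅X,Z⁆·E_iᵀ) + trace(⁅E_i,Z⁆·Xᵀ) = 0. -/

import Mathlib

/-!
The Koszul expression `K_Y(X, Z)` is bilinear in `(X, Z)` and changes sign when `X` and `Z` are
swapped, so it suffices to check it on pairs of generators of `𝔤`. The products `E_j E_k` and
`E_j 𝐀` vanish, so for `Y = E_i` only the mixed pair `(E_j, 𝐀)` contributes, namely
`-(A_ij + A_ji)`. This is zero because `A + Aᵀ = diag(0, …, 0, 2a)` has zero `i`-th column for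
`i ≤ d - 1`.
-/
open Matrix

theorem LinearMap.apply_eq_zero_of_mem_span₂ {R M N P : Type*} [CommSemiring R]
    [AddCommMonoid M] [AddCommMonoid N] [AddCommMonoid P] [Module R M] [Module R N] [Module R P]
    (B : M →ₗ[R] N →ₗ[R] P) {s : Set M} {t : Set N} (h : ∀ x ∈ s, ∀ y ∈ t, B x y = 0)
    {x : M} {y : N} (hx : x ∈ Submodule.span R s) (hy : y ∈ Submodule.span R t) : B x y = 0 := by
  have hs : ∀ y ∈ t, B.flip y x = 0 := fun y hy =>
    LinearMap.eqOn_span (f := B.flip y) (g := 0) (fun x hx => h x hx y hy) hx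
  exact LinearMap.eqOn_span (f := B x) (g := 0) hs hy

section Koszul

variable {R n : Type*} [CommRing R] [Fintype n]

/-- `koszulForm Y X Z = 2⟨∇_X Y, Z⟩` for the left-invariant metric `⟨X, Y⟩ = trace (X Yᵀ)`. -/
def koszulForm (Y : Matrix n n R) : Matrix n n R →ₗ[R] Matrix n n R →ₗ[R] R :=
  LinearMap.mk₂ R (fun X Z => trace (⁅X, Y⁆ * Zᵀ) + trace (⁅X, Z⁆ * Yᵀ) + trace (⁅Y, Z⁆ * Xᵀ))
    (fun _ _ _ => by
      simp only [Ring.lie_def, add_mul, mul_add, sub_mul, transpose_add, trace_add, trace_sub]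
      ring)
    (fun _ _ _ => by
      simp only [Ring.lie_def, mul_add, sub_mul, mul_sub, transpose_smul, Matrix.smul_mul,
        Matrix.mul_smul, trace_sub, trace_smul, smul_eq_mul])
    (fun _ _ _ => by
      simp only [Ring.lie_def, add_mul, mul_add, sub_mul, transpose_add, trace_add, trace_sub]
      ring)
    (fun _ _ _ => by
      simp only [Ring.lie_def, mul_add, sub_mul, mul_sub, transpose_smul, Matrix.smul_mul,
        Matrix.mul_smul, trace_sub, trace_smul, smul_eq_mul])

@[simp]
theorem koszulForm_apply (X Y Z : Matrix n n R) :
    koszulForm Y X Z = trace (⁅X, Y⁆ * Zᵀ) + trace (⁅X, Z⁆ * Yᵀ) + trace (⁅Y, Z⁆ * Xᵀ) := rfl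

theorem koszulForm_swap (X Y Z : Matrix n n R) : koszulForm Y Z X = -koszulForm Y X Z := by
  simp only [koszulForm_apply, Ring.lie_def, sub_mul, trace_sub]
  ring

theorem koszulForm_self (X Y : Matrix n n R) : koszulForm Y X X = 0 := by
  simp only [koszulForm_apply, Ring.lie_def, sub_self, zero_mul, sub_mul, trace_sub, trace_zero]
  ring

end Koszul

section Affine

variable {R n : Type*} [CommRing R] [Fintype n]

def affTranslation (v : n → R) : Matrix (n ⊕ Unit) (n ⊕ Unit) R :=
  fromBlocks 0 (replicateCol Unit v) 0 0

def affLinear (A : Matrix n n R) : Matrix (n ⊕ Unit) (n ⊕ Unit) R :=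
  fromBlocks A 0 0 0

theorem affTranslation_mul_affTranslation (v w : n → R) :
    affTranslation v * affTranslation w = 0 := by
  simp [affTranslation, fromBlocks_multiply]

theorem affTranslation_mul_affLinear (v : n → R) (A : Matrix n n R) :
    affTranslation v * affLinear A = 0 := by
  simp [affTranslation, affLinear, fromBlocks_multiply]

theorem affLinear_mul_affTranslation (A : Matrix n n R) (v : n → R) :
    affLinear A * affTranslation v = affTranslation (A *ᵥ v) := by
  simp [affTranslation, affLinear, fromBlocks_multiply, replicateCol_mulVec]

theorem trace_affTranslation_mul_transpose (v w : n → R) :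
    trace (affTranslation v * (affTranslation w)ᵀ) = v ⬝ᵥ w := by
  simp [affTranslation, fromBlocks_transpose, fromBlocks_multiply, trace, Fintype.sum_sum_type,
    dotProduct, mul_apply]

theorem koszulForm_affTranslation (u v w : n → R) :
    koszulForm (affTranslation v) (affTranslation u) (affTranslation w) = 0 := by
  simp [Ring.lie_def, affTranslation_mul_affTranslation]

theorem koszulForm_affTranslation_affLinear {A : Matrix n n R} {v : n → R}
    (h : (A + Aᵀ) *ᵥ v = 0) (w : n → R) :
    koszulForm (affTranslation v) (affTranslation w) (affLinear A) = 0 := by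
  simp only [koszulForm_apply, Ring.lie_def, affTranslation_mul_affTranslation,
    affTranslation_mul_affLinear, affLinear_mul_affTranslation, sub_self, zero_sub, zero_mul,
    neg_mul, trace_zero, trace_neg, trace_affTranslation_mul_transpose]
  have hw : w ⬝ᵥ ((A + Aᵀ) *ᵥ v) = 0 := by rw [h, dotProduct_zero]
  rw [add_mulVec, dotProduct_add, mulVec_transpose, dotProduct_comm w (v ᵥ* A),
    ← dotProduct_mulVec, dotProduct_comm v] at hw
  rw [dotProduct_comm (A *ᵥ v)]
  linear_combination -hw

end Affine

theorem Matrix.transpose_eq_neg_of_apply_eq_ite {R n : Type*} [Ring R] [LinearOrder n]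
    {M : Matrix n n R} (hM : ∀ i j, M i j = if i < j then 1 else if j < i then -1 else 0) :
    Mᵀ = -M := by
  ext i j
  simp only [transpose_apply, neg_apply, hM]
  rcases lt_trichotomy i j with h | rfl | h
  · simp [h, h.not_gt]
  · simp
  · simp [h, h.not_gt]

theorem Matrix.fromBlocks_add_transpose_of_transpose_eq_neg {R m o : Type*} [AddCommGroup R]
    {B : Matrix m m R} (hB : Bᵀ = -B) (C : Matrix m o R) (D : Matrix o o R) :
    fromBlocks B C (-Cᵀ) D + (fromBlocks B C (-Cᵀ) D)ᵀ = fromBlocks 0 0 0 (D + Dᵀ) := by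
  simp [fromBlocks_transpose, fromBlocks_add, hB]

/-- The Koszul-formula identity `⟨⁅X,E_i⁆,Z⟩ + ⟨⁅X,Z⁆,E_i⟩ + ⟨⁅E_i,Z⁆,X⟩ = 0` (with the
inner product `⟨X,Y⟩ = trace (X Yᵀ)`) holds for every `i = 1, …, d-1` and all `X, Z ∈ 𝔤`;
i.e. `E₁, …, E_{d-1}` are transvections at the identity. -/
theorem stmt13 (d : ℕ) (hd : 3 ≤ d) (a : ℝ)
    (M' : Matrix (Fin (d - 1)) (Fin (d - 1)) ℝ)
    (hM' : ∀ i j : Fin (d - 1), M' i j = if i < j then 1 else if j < i then -1 else 0)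
    (A : Matrix (Fin (d - 1) ⊕ Unit) (Fin (d - 1) ⊕ Unit) ℝ)
    (hA : A = fromBlocks (a • M')
      (a • Matrix.replicateCol Unit (Pi.single (⟨0, by omega⟩ : Fin (d - 1)) 1))
      (-(a • Matrix.replicateRow Unit (Pi.single (⟨0, by omega⟩ : Fin (d - 1)) 1)))
      (a • (1 : Matrix Unit Unit ℝ)))
    (E : (Fin (d - 1) ⊕ Unit) →
      Matrix ((Fin (d - 1) ⊕ Unit) ⊕ Unit) ((Fin (d - 1) ⊕ Unit) ⊕ Unit) ℝ)
    (hE : ∀ i, E i = fromBlocks 0 (Matrix.replicateCol Unit (Pi.single i 1)) 0 0)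
    (Abig : Matrix ((Fin (d - 1) ⊕ Unit) ⊕ Unit) ((Fin (d - 1) ⊕ Unit) ⊕ Unit) ℝ)
    (hAbig : Abig = fromBlocks A 0 0 0)
    (𝔤 : Submodule ℝ (Matrix ((Fin (d - 1) ⊕ Unit) ⊕ Unit) ((Fin (d - 1) ⊕ Unit) ⊕ Unit) ℝ))
    (h𝔤 : 𝔤 = Submodule.span ℝ (Set.range E ∪ {Abig})) :
    ∀ i : Fin (d - 1), ∀ X ∈ 𝔤, ∀ Z ∈ 𝔤,
      Matrix.trace (⁅X, E (Sum.inl i)⁆ * Zᵀ) +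
      Matrix.trace (⁅X, Z⁆ * (E (Sum.inl i))ᵀ) +
      Matrix.trace (⁅E (Sum.inl i), Z⁆ * Xᵀ) = 0 := by
  intro i X hX Z hZ
  have hsymm : A + Aᵀ = fromBlocks 0 0 0 (a • 1 + (a • 1)ᵀ) := by
    rw [hA, ← transpose_replicateCol, ← transpose_smul]
    exact fromBlocks_add_transpose_of_transpose_eq_neg
      (by rw [transpose_smul, transpose_eq_neg_of_apply_eq_ite hM', smul_neg]) _ _
  have hcol : (A + Aᵀ) *ᵥ Pi.single (Sum.inl i) 1 = 0 := by
    ext (j | j) <;> simp [hsymm]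
  obtain rfl : E = fun j => affTranslation (Pi.single j 1) := funext hE
  obtain rfl : Abig = affLinear A := hAbig
  subst h𝔤
  refine (koszulForm _).apply_eq_zero_of_mem_span₂ ?_ hX hZ
  rintro _ (⟨j, rfl⟩ | rfl) _ (⟨k, rfl⟩ | rfl)
  · exact koszulForm_affTranslation _ _ _
  · exact koszulForm_affTranslation_affLinear hcol _
  · rw [koszulForm_swap, koszulForm_affTranslation_affLinear hcol, neg_zero]
  · exact koszulForm_self _ _
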